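/- Let L be a closed line segment in ℝ² of length |L| < 2r. Then the r-spindle S(L,r) equals the intersection of all closed balls of radius at most r that contain L. -/

import Mathlib

/-!
Put the midpoint of `[x, y]` at the origin, with `x = (-a, 0)`, `y = (a, 0)` and
`h = √(r² - a²)`. The two `r`-circles through `x` and `y` are centred at `(0, ±h)`, so a point
`(α, β)` of the spindle satisfies `α² + β² + 2h|β| ≤ a²`, whence `|α| ≤ a`. A disc of radius
`s ≤ r` centred at `(γ, δ)` containing `x` and `y` satisfies `(|γ| + a)² + δ² ≤ s²`, whence
`|δ| ≤ h`. Expanding `(α - γ)² + (β - δ)²` and bounding the cross terms by `2a|γ| + 2h|β|`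
gives exactly the sum of these two inequalities.
-/

open Metric Module
open scoped RealInnerProductSpace

def spindle {P : Type*} [PseudoMetricSpace P] (x y : P) (r : ℝ) : Set P :=
  {p | ∀ c, dist c x = r → dist c y = r → p ∈ closedBall c r}

theorem abs_add_sq_add_sq_le {a b t S : ℝ} (h₁ : (b + a) ^ 2 + t ^ 2 ≤ S)
    (h₂ : (b - a) ^ 2 + t ^ 2 ≤ S) : (|b| + a) ^ 2 + t ^ 2 ≤ S := by
  rcases abs_cases b with ⟨hb, -⟩ | ⟨hb, -⟩
  · rwa [hb]
  · rwa [hb, show (-b + a) ^ 2 = (b - a) ^ 2 by ring]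

theorem sq_add_sq_le_of_lens {a h s α β γ δ : ℝ} (ha : 0 ≤ a) (hh : 0 ≤ h)
    (hs : s ^ 2 ≤ a ^ 2 + h ^ 2) (hp : (|β| + h) ^ 2 + α ^ 2 ≤ a ^ 2 + h ^ 2)
    (hc : (|γ| + a) ^ 2 + δ ^ 2 ≤ s ^ 2) :
    (α - γ) ^ 2 + (β - δ) ^ 2 ≤ s ^ 2 := by
  have hα : |α| ≤ a := abs_le_of_sq_le_sq (by nlinarith [abs_nonneg β]) ha
  have hδ : |δ| ≤ h := abs_le_of_sq_le_sq (by nlinarith [abs_nonneg γ]) hh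
  calc (α - γ) ^ 2 + (β - δ) ^ 2
      = α ^ 2 + β ^ 2 + γ ^ 2 + δ ^ 2 - 2 * (α * γ) - 2 * (β * δ) := by ring
    _ ≤ α ^ 2 + β ^ 2 + γ ^ 2 + δ ^ 2 + 2 * (|α| * |γ|) + 2 * (|β| * |δ|) := by
        rw [← abs_mul, ← abs_mul]
        linarith [neg_abs_le (α * γ), neg_abs_le (β * δ)]
    _ ≤ α ^ 2 + β ^ 2 + γ ^ 2 + δ ^ 2 + 2 * (a * |γ|) + 2 * (|β| * h) := by gcongr
    _ = ((|β| + h) ^ 2 + α ^ 2 - h ^ 2) + ((|γ| + a) ^ 2 + δ ^ 2 - a ^ 2) := by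
        rw [← sq_abs β, ← sq_abs γ]; ring
    _ ≤ s ^ 2 := by linarith

theorem exists_norm_eq_one_and_eq_norm_smul {E : Type*} [NormedAddCommGroup E]
    [NormedSpace ℝ E] [Nontrivial E] (v : E) : ∃ u : E, ‖u‖ = 1 ∧ v = ‖v‖ • u := by
  rcases eq_or_ne v 0 with rfl | hv
  · obtain ⟨u, hu⟩ := exists_norm_eq E zero_le_one
    exact ⟨u, hu, by simp⟩
  · refine ⟨‖v‖⁻¹ • v, norm_smul_inv_norm hv, ?_⟩
    rw [smul_smul, mul_inv_cancel₀ (norm_ne_zero_iff.2 hv), one_smul]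

section

attribute [local instance] FiniteDimensional.of_fact_finrank_eq_two

variable {V : Type*} [NormedAddCommGroup V] [InnerProductSpace ℝ V] [Fact (finrank ℝ V = 2)]

namespace Orientation

variable (o : Orientation ℝ V (Fin 2))

local notation "ω" => o.areaForm
local notation "J" => o.rightAngleRotation

theorem dist_sq_eq_inner_sq_add_areaForm_sq {u : V} (hu : ‖u‖ = 1) (v w : V) :
    dist v w ^ 2 = (⟪u, v⟫ - ⟪u, w⟫) ^ 2 + (ω u v - ω u w) ^ 2 := by
  rw [← inner_sub_right, ← map_sub, o.inner_sq_add_areaForm_sq, hu, dist_eq_norm]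
  ring

theorem dist_add_smul_add_smul_rightAngleRotation_sq {u : V} (hu : ‖u‖ = 1) (x w : V)
    (a t : ℝ) :
    dist (x + a • u + t • J u) w ^ 2 = (⟪u, x⟫ + a - ⟪u, w⟫) ^ 2 + (ω u x + t - ω u w) ^ 2 := by
  simp [o.dist_sq_eq_inner_sq_add_areaForm_sq hu, inner_add_right, inner_smul_right, hu,
    o.areaForm_rightAngleRotation_right]

theorem inner_and_areaForm_of_eq_add_smul {u x y : V} (hu : ‖u‖ = 1) {a : ℝ}
    (hy : y = x + a • u) : ⟪u, y⟫ = ⟪u, x⟫ + a ∧ ω u y = ω u x := by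
  subst hy
  simp [inner_add_right, inner_smul_right, hu]

-- The centres `x + a • u ± √(r² - a²) • J u` are at distance `r` from both `x` and `y`.
theorem lens_of_mem_spindle {u x y p : V} (hu : ‖u‖ = 1) {a r : ℝ} (ha : 0 ≤ a) (har : a < r)
    (hy : y = x + (2 * a) • u) (hp : p ∈ spindle x y r) :
    (|ω u p - ω u x| + √(r ^ 2 - a ^ 2)) ^ 2 + (⟪u, p⟫ - ⟪u, x⟫ - a) ^ 2 ≤ r ^ 2 := by
  set h := √(r ^ 2 - a ^ 2)
  have hh : h ^ 2 = r ^ 2 - a ^ 2 := Real.sq_sqrt (by nlinarith)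
  have hr : 0 ≤ r := ha.trans har.le
  obtain ⟨hξy, hηy⟩ := o.inner_and_areaForm_of_eq_add_smul hu hy
  have hcenter : ∀ t, t ^ 2 = h ^ 2 →
      (ω u p - ω u x - t) ^ 2 + (⟪u, p⟫ - ⟪u, x⟫ - a) ^ 2 ≤ r ^ 2 := by
    intro t ht
    have hdist : ∀ w : V, dist (x + a • u + t • J u) w = r ↔
        (⟪u, x⟫ + a - ⟪u, w⟫) ^ 2 + (ω u x + t - ω u w) ^ 2 = r ^ 2 := fun w => by
      rw [← o.dist_add_smul_add_smul_rightAngleRotation_sq hu, sq_eq_sq₀ dist_nonneg hr]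
    have hpc := hp (x + a • u + t • J u) ((hdist x).2 (by linarith))
      ((hdist y).2 (by rw [hξy, hηy]; linarith))
    rw [mem_closedBall', ← sq_le_sq₀ dist_nonneg hr,
      o.dist_add_smul_add_smul_rightAngleRotation_sq hu] at hpc
    linarith
  refine abs_add_sq_add_sq_le ?_ ?_
  · simpa using hcenter (-h) (by ring)
  · exact hcenter h rfl

end Orientation

theorem dist_le_of_mem_spindle {x y p c : V} {r s : ℝ} (hxy : dist x y < 2 * r)
    (hp : p ∈ spindle x y r) (hs : s ≤ r) (hx : dist x c ≤ s) (hy : dist y c ≤ s) :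
    dist p c ≤ s := by
  have : Nontrivial V := nontrivial_of_finrank_eq_succ (@Fact.out (finrank ℝ V = 2) _)
  let o : Orientation ℝ V (Fin 2) := (finBasisOfFinrankEq ℝ V Fact.out).orientation
  obtain ⟨u, hu, hyx⟩ := exists_norm_eq_one_and_eq_norm_smul (y - x)
  set a := dist x y / 2 with ha_def
  have ha : 0 ≤ a := by positivity
  have har : a < r := by linarith
  have hyu : y = x + (2 * a) • u := by
    rw [sub_eq_iff_eq_add'.1 hyx, ha_def, ← dist_eq_norm, dist_comm]
    ring_nf
  have hs₀ : 0 ≤ s := dist_nonneg.trans hx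
  have hh : √(r ^ 2 - a ^ 2) ^ 2 = r ^ 2 - a ^ 2 := Real.sq_sqrt (by nlinarith)
  obtain ⟨hξy, hηy⟩ := o.inner_and_areaForm_of_eq_add_smul hu hyu
  have hxc := pow_le_pow_left₀ dist_nonneg hx 2
  have hyc := pow_le_pow_left₀ dist_nonneg hy 2
  rw [o.dist_sq_eq_inner_sq_add_areaForm_sq hu] at hxc hyc
  rw [hξy, hηy] at hyc
  rw [← sq_le_sq₀ dist_nonneg hs₀, o.dist_sq_eq_inner_sq_add_areaForm_sq hu]
  have key := sq_add_sq_le_of_lens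
    (α := ⟪u, p⟫ - ⟪u, x⟫ - a) (β := o.areaForm u p - o.areaForm u x)
    (γ := ⟪u, c⟫ - ⟪u, x⟫ - a) (δ := o.areaForm u c - o.areaForm u x)
    (s := s) ha (Real.sqrt_nonneg _) (by nlinarith)
    (by rw [hh]; linarith [o.lens_of_mem_spindle hu ha har hyu hp])
    (abs_add_sq_add_sq_le (by linarith) (by linarith))
  linarith

end

theorem stmt3_general (r : ℝ) (x y : EuclideanSpace ℝ (Fin 2))
    (hxy : dist x y < 2 * r) :
    {p : EuclideanSpace ℝ (Fin 2) |
        ∀ c : EuclideanSpace ℝ (Fin 2), dist c x = r → dist c y = r → p ∈ closedBall c r} =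
    {p : EuclideanSpace ℝ (Fin 2) |
        ∀ (c : EuclideanSpace ℝ (Fin 2)) (s : ℝ), s ≤ r →
          segment ℝ x y ⊆ closedBall c s → p ∈ closedBall c s} := by
  have : Fact (finrank ℝ (EuclideanSpace ℝ (Fin 2)) = 2) := ⟨finrank_euclideanSpace_fin⟩
  ext p
  constructor
  · intro hp c s hs hseg
    exact dist_le_of_mem_spindle hxy hp hs (hseg (left_mem_segment ℝ x y))
      (hseg (right_mem_segment ℝ x y))
  · intro hp c hcx hcy
    exact hp c r le_rfl <| (convex_closedBall c r).segment_subset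
      (mem_closedBall'.2 hcx.le) (mem_closedBall'.2 hcy.le)

/-- The `r`-spindle around a segment `L` of length `< 2r` (defined as the
intersection of all closed `r`-balls whose bounding spheres contain both
endpoints of `L`) equals the intersection of all closed balls of radius at
most `r` that contain `L`. -/
theorem stmt3 (r : ℝ) (hr : 0 < r) (x y : EuclideanSpace ℝ (Fin 2))
    (hxy : dist x y < 2 * r) :
    {p : EuclideanSpace ℝ (Fin 2) |
        ∀ c : EuclideanSpace ℝ (Fin 2), dist c x = r → dist c y = r → p ∈ closedBall c r} =
    {p : EuclideanSpace ℝ (Fin 2) |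
        ∀ (c : EuclideanSpace ℝ (Fin 2)) (s : ℝ), s ≤ r →
          segment ℝ x y ⊆ closedBall c s → p ∈ closedBall c s} :=
  stmt3_general r x y hxy
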